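/- arXiv:2602.08094 — 6 statements merged into one kernel-verified Lean document; each statement's English description precedes it below -/
import Mathlib

section
/- Let s ≥ 1, let A be a real s×s matrix, b ∈ ℝ^s, let e ∈ ℝ^s be the all-ones vector, and set A† = e bᵀ − A. Fix h ∈ ℝ and set z = i·h ∈ ℂ. Viewing A and A† as complex matrices, assume det(I − z·A) ≠ 0 and det(I − z·A†) ≠ 0. Then Re( (det(I + z·A†)/det(I − z·A)) · conj( det(I + z·A)/det(I − z·A†) ) ) = 1. (This is the determinant of the 2×2 update matrix of the decoupled symplectic method applied to the harmonic test problem, proving it is linearly symplectic for any underlying Runge–Kutta method.) -/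
open Matrix Complex

/-- The decoupled symplectic method is linearly symplectic for any underlying
Runge–Kutta method: the determinant of its 2×2 update matrix on the harmonic
test problem, `Re(R_Φ(ih) ⋅ conj(R_Ψ(ih)))`, equals 1. -/
theorem decoupled_symplectic_linearly_symplectic
    (s : ℕ) (hs : 1 ≤ s) (A : Matrix (Fin s) (Fin s) ℝ) (b : Fin s → ℝ) (h : ℝ) :
    let e : Fin s → ℝ := fun _ => 1
    let Adag : Matrix (Fin s) (Fin s) ℝ := Matrix.vecMulVec e b - A
    let z : ℂ := Complex.I * (h : ℂ)
    let Ac : Matrix (Fin s) (Fin s) ℂ := A.map (Complex.ofReal)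
    let Adc : Matrix (Fin s) (Fin s) ℂ := Adag.map (Complex.ofReal)
    (1 - z • Ac).det ≠ 0 → (1 - z • Adc).det ≠ 0 →
      ((((1 + z • Adc).det / (1 - z • Ac).det) *
        (starRingEnd ℂ) ((1 + z • Ac).det / (1 - z • Adc).det))).re = 1 := by
  intro e Adag z Ac Adc h1 h2
  have hz : (starRingEnd ℂ) z = -z := by
    simp [z, Complex.conj_I, mul_comm]
  have key : ∀ M : Matrix (Fin s) (Fin s) ℝ,
      (starRingEnd ℂ) ((1 + z • M.map (Complex.ofReal)).det)
        = (1 - z • M.map (Complex.ofReal)).det := by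
    intro M
    rw [RingHom.map_det]
    congr 1
    ext i j
    simp [Matrix.map_apply, Matrix.one_apply, hz]
    by_cases hij : i = j <;> simp [hij] <;> ring
  have key2 : ∀ M : Matrix (Fin s) (Fin s) ℝ,
      (starRingEnd ℂ) ((1 - z • M.map (Complex.ofReal)).det)
        = (1 + z • M.map (Complex.ofReal)).det := by
    intro M
    rw [RingHom.map_det]
    congr 1
    ext i j
    simp [Matrix.map_apply, Matrix.one_apply, hz]
  have h3 : (1 + z • Adc).det ≠ 0 := by
    rw [← key2 Adag]
    simpa using h2
  rw [map_div₀, key A, key2 Adag]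
  have : (1 + z • Adc).det / (1 - z • Ac).det * ((1 - z • Ac).det / (1 + z • Adc).det)
      = 1 := by
    field_simp
  rw [this]
  simp
end

section
/- For all h > 0, ω > 0 and α ∈ ℝ, with ħ = h²ω² and Q_α(h,ω) = (1/(1+ħ)) · [[1, h], [−hω²(1+αħ), 1+αħ]], one has (trace Q_α)² − 4·det Q_α = −(4ħ + α(4−α)ħ²)/(1+ħ)². In particular, if 0 ≤ α ≤ 4 then (trace Q_α)² − 4·det Q_α ≤ 0, so the eigenvalues of Q_α are complex (non-real or repeated real), unconditionally in h. -/
/-- The one-step update matrix of the decoupled α-method based on implicit Euler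
(A-search with fixed α) on the harmonic test problem. -/
noncomputable def Qalpha (h ω α : ℝ) : Matrix (Fin 2) (Fin 2) ℝ :=
  (1 / (1 + h ^ 2 * ω ^ 2)) •
    !![1, h; -h * ω ^ 2 * (1 + α * (h ^ 2 * ω ^ 2)), 1 + α * (h ^ 2 * ω ^ 2)]

/-- `(trace Q_α)² − 4 det Q_α = −(4ħ + α(4−α)ħ²)/(1+ħ)²`, and this discriminant
is nonpositive whenever `0 ≤ α ≤ 4`, unconditionally in `h`. -/
theorem discriminant_Qalpha (h ω α : ℝ) (hh : 0 < h) (hω : 0 < ω) :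
    (Qalpha h ω α).trace ^ 2 - 4 * (Qalpha h ω α).det =
      -((4 * (h ^ 2 * ω ^ 2) + α * (4 - α) * (h ^ 2 * ω ^ 2) ^ 2) /
        (1 + h ^ 2 * ω ^ 2) ^ 2) ∧
    (0 ≤ α → α ≤ 4 → (Qalpha h ω α).trace ^ 2 - 4 * (Qalpha h ω α).det ≤ 0) := by
  have hq : (0:ℝ) < h ^ 2 * ω ^ 2 := by positivity
  have hne : (1 + h ^ 2 * ω ^ 2) ≠ 0 := by positivity
  have key : (Qalpha h ω α).trace ^ 2 - 4 * (Qalpha h ω α).det =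
      -((4 * (h ^ 2 * ω ^ 2) + α * (4 - α) * (h ^ 2 * ω ^ 2) ^ 2) /
        (1 + h ^ 2 * ω ^ 2) ^ 2) := by
    simp [Qalpha, Matrix.trace_fin_two, Matrix.det_fin_two, Matrix.smul_apply]
    field_simp
    ring
  refine ⟨key, fun h0 h4 => ?_⟩
  rw [key, neg_nonpos]
  have : 0 ≤ α * (4 - α) * (h ^ 2 * ω ^ 2) ^ 2 := by
    have : 0 ≤ α * (4 - α) := mul_nonneg h0 (by linarith)
    positivity
  positivity
end

section
/- For all h > 0 and ω > 0, with ħ = h²ω², the A-1 update matrix Q₁(h,ω) = (1/(1+ħ)) · [[1, h], [−hω²(1+ħ), 1+ħ]] satisfies det Q₁(h,ω) = 1, trace Q₁(h,ω) = (2+ħ)/(1+ħ) with |trace Q₁(h,ω)| ≤ 2, and every complex eigenvalue of Q₁(h,ω) has absolute value 1. (The A-1 method is unconditionally stably symplectic.) -/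
/-- The one-step update matrix of the A-1 method (the decoupled symplectic method
based on implicit Euler) on the harmonic test problem. -/
noncomputable def Q1 (h ω : ℝ) : Matrix (Fin 2) (Fin 2) ℝ :=
  (1 / (1 + h ^ 2 * ω ^ 2)) •
    !![1, h; -h * ω ^ 2 * (1 + h ^ 2 * ω ^ 2), 1 + h ^ 2 * ω ^ 2]

/-- The A-1 method is unconditionally stably symplectic: `det Q₁ = 1`,
`trace Q₁ = (2+ħ)/(1+ħ)` with `|trace Q₁| ≤ 2`, and every complex eigenvalue of
`Q₁` has absolute value 1. -/
theorem A1_stably_symplectic (h ω : ℝ) (hh : 0 < h) (hω : 0 < ω) :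
    (Q1 h ω).det = 1 ∧
    (Q1 h ω).trace = (2 + h ^ 2 * ω ^ 2) / (1 + h ^ 2 * ω ^ 2) ∧
    |(Q1 h ω).trace| ≤ 2 ∧
    ∀ μ ∈ spectrum ℂ ((Q1 h ω).map (Complex.ofReal)), ‖μ‖ = 1 := by
  have hH : 0 < h ^ 2 * ω ^ 2 := by positivity
  have hp : 0 < 1 + h ^ 2 * ω ^ 2 := by positivity
  have hp' : (1 : ℝ) + h ^ 2 * ω ^ 2 ≠ 0 := ne_of_gt hp
  have hdet : (Q1 h ω).det = 1 := by
    simp [Q1, Matrix.det_fin_two, Matrix.smul_apply]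
    field_simp
  have htr : (Q1 h ω).trace = (2 + h ^ 2 * ω ^ 2) / (1 + h ^ 2 * ω ^ 2) := by
    simp [Q1, Matrix.trace_fin_two, Matrix.smul_apply]
    field_simp
    ring
  refine ⟨hdet, htr, ?_, ?_⟩
  · rw [htr, abs_of_pos (by positivity), div_le_iff₀ hp]
    nlinarith
  · intro μ hμ
    rw [spectrum.mem_iff] at hμ
    have hdet0 : ((algebraMap ℂ (Matrix (Fin 2) (Fin 2) ℂ)) μ -
        (Q1 h ω).map Complex.ofReal).det = 0 := by
      by_contra hne
      exact hμ ((Matrix.isUnit_iff_isUnit_det _).2 (isUnit_iff_ne_zero.2 hne))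
    set t : ℝ := (2 + h ^ 2 * ω ^ 2) / (1 + h ^ 2 * ω ^ 2) with ht
    have hcne : ((1 : ℂ) + (h : ℂ) ^ 2 * (ω : ℂ) ^ 2) ≠ 0 := by
      have : ((1 + h ^ 2 * ω ^ 2 : ℝ) : ℂ) ≠ 0 := Complex.ofReal_ne_zero.2 hp'
      push_cast at this
      exact this
    have key : μ ^ 2 - (t : ℂ) * μ + 1 = 0 := by
      rw [Matrix.det_fin_two] at hdet0
      simp only [Matrix.sub_apply, Matrix.algebraMap_matrix_apply, Matrix.map_apply, Q1,
        Matrix.smul_apply, Matrix.cons_val', Matrix.cons_val_zero, Matrix.cons_val_one,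
        Matrix.head_cons, Matrix.head_fin_const, Matrix.empty_val', Matrix.cons_val_fin_one,
        if_pos rfl, Matrix.of_apply] at hdet0
      rw [ht]
      push_cast [smul_eq_mul, Algebra.algebraMap_self_apply, if_neg (by decide : ¬ ((0 : Fin 2) = 1)),
        if_neg (by decide : ¬ ((1 : Fin 2) = 0))] at hdet0 ⊢
      field_simp at hdet0 ⊢
      linear_combination hdet0
    have ht2 : t < 2 := by
      rw [ht, div_lt_iff₀ hp]; nlinarith
    have ht0 : 0 < t := by positivity
    have keyc : (starRingEnd ℂ) μ ^ 2 - (t : ℂ) * (starRingEnd ℂ) μ + 1 = 0 := by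
      have := congrArg (starRingEnd ℂ) key
      simpa [map_sub, map_add, map_mul, map_pow, Complex.conj_ofReal] using this
    by_cases hc : (starRingEnd ℂ) μ = μ
    · exfalso
      have him : μ.im = 0 := Complex.conj_eq_iff_im.mp hc
      have hre : (μ.re : ℂ) = μ := Complex.conj_eq_iff_re.mp hc
      have : (μ.re : ℂ) ^ 2 - (t : ℂ) * (μ.re : ℂ) + 1 = 0 := by rw [hre]; exact key
      have hr : μ.re ^ 2 - t * μ.re + 1 = 0 := by
        exact_mod_cast this
      nlinarith [sq_nonneg (2 * μ.re - t)]
    · have hsum : μ + (starRingEnd ℂ) μ = (t : ℂ) := by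
        have hdiff : (μ - (starRingEnd ℂ) μ) * (μ + (starRingEnd ℂ) μ - (t : ℂ)) = 0 := by
          linear_combination key - keyc
        rcases mul_eq_zero.mp hdiff with h1 | h1
        · exact absurd (sub_eq_zero.mp h1).symm hc
        · linear_combination h1
      have hprod : μ * (starRingEnd ℂ) μ = 1 := by
        have : (starRingEnd ℂ) μ = (t : ℂ) - μ := by linear_combination hsum
        rw [this]
        linear_combination -key
      have hns : (Complex.normSq μ : ℂ) = 1 := by
        rw [← Complex.mul_conj]; exact hprod
      have hns' : Complex.normSq μ = 1 := by exact_mod_cast hns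
      have : ‖μ‖ ^ 2 = 1 := by rw [Complex.sq_norm, hns']
      nlinarith [norm_nonneg μ]
end

section
/- Let d ≥ 1, let M be a symmetric positive-definite real d×d matrix, let P : ℝ^d → ℝ be a differentiable convex function with gradient ∇P, let h > 0, and define H(x,v) = (1/2)⟨v, M v⟩ + P(x). Suppose (x₁, v₁) is an explicit Euler step from (x₀, v₀): x₁ = x₀ + h v₀ and v₁ = v₀ − h M⁻¹ ∇P(x₀). Then H(x₁, v₁) ≥ H(x₀, v₀) + (h²/2) ⟨∇P(x₀), M⁻¹ ∇P(x₀)⟩; in particular explicit Euler never decreases the energy H for a convex potential. -/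
open RealInnerProductSpace Matrix

private lemma grad_ineq {d : ℕ} {P : EuclideanSpace ℝ (Fin d) → ℝ}
    {g x y : EuclideanSpace ℝ (Fin d)}
    (hconv : ConvexOn ℝ Set.univ P) (hg : HasGradientAt P g x) :
    P x + ⟪g, y - x⟫ ≤ P y := by
  set L : ℝ → ℝ := fun t => P (x + t • (y - x)) with hL
  have hcurve : HasDerivAt (fun t : ℝ => x + t • (y - x)) (y - x) 0 := by
    simpa using ((hasDerivAt_id (0 : ℝ)).smul_const (y - x)).const_add x
  have hF : HasFDerivAt P ((InnerProductSpace.toDual ℝ _) g) x := hg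
  have hF' : HasFDerivAt P ((InnerProductSpace.toDual ℝ _) g)
      ((fun t : ℝ => x + t • (y - x)) 0) := by simpa using hF
  have hLd : HasDerivAt L ⟪g, y - x⟫ 0 := by
    have := hF'.comp_hasDerivAt 0 hcurve
    simp only [InnerProductSpace.toDual_apply_apply] at this
    exact this
  have htend : Filter.Tendsto (slope L 0) (nhdsWithin 0 (Set.Ioi 0)) (nhds ⟪g, y - x⟫) :=
    (hasDerivAt_iff_tendsto_slope.1 hLd).mono_left
      (nhdsWithin_mono _ (fun t ht => ne_of_gt ht))
  have hbound : ∀ᶠ t in nhdsWithin (0:ℝ) (Set.Ioi 0), slope L 0 t ≤ P y - P x := by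
    filter_upwards [Ioc_mem_nhdsGT_of_mem (Set.left_mem_Ico.2 one_pos)] with t ht
    have ht0 : 0 < t := ht.1
    have ht1 : t ≤ 1 := ht.2
    have hxt : x + t • (y - x) = (1 - t) • x + t • y := by
      rw [smul_sub, sub_smul, one_smul]; abel
    have hc := hconv.2 (Set.mem_univ x) (Set.mem_univ y)
      (by linarith : (0:ℝ) ≤ 1 - t) ht0.le (by ring)
    have hLt : L t ≤ (1 - t) * P x + t * P y := by
      rw [hL]; simpa [hxt] using hc
    have hL0 : L 0 = P x := by simp [hL]
    rw [slope_def_field, sub_zero, div_le_iff₀ ht0]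
    calc L t - L 0 ≤ (1 - t) * P x + t * P y - P x := by rw [hL0]; linarith
      _ = (P y - P x) * t := by ring
  have : ⟪g, y - x⟫ ≤ P y - P x :=
    le_of_tendsto htend hbound
  linarith

private lemma inner_toEuc {d : ℕ} (N : Matrix (Fin d) (Fin d) ℝ)
    (a b : EuclideanSpace ℝ (Fin d)) :
    ⟪a, Matrix.toEuclideanLin N b⟫ =
      dotProduct (WithLp.equiv 2 _ a) (N.mulVec (WithLp.equiv 2 _ b)) := by
  simp [Matrix.toEuclideanLin_apply, PiLp.inner_apply, RCLike.inner_apply, dotProduct, mul_comm]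

private lemma toEuc_symm {d : ℕ} {N : Matrix (Fin d) (Fin d) ℝ} (hN : Nᵀ = N)
    (a b : EuclideanSpace ℝ (Fin d)) :
    ⟪Matrix.toEuclideanLin N a, b⟫ = ⟪a, Matrix.toEuclideanLin N b⟫ := by
  rw [real_inner_comm, inner_toEuc, inner_toEuc, Matrix.dotProduct_mulVec]
  conv_lhs => rw [← hN, Matrix.vecMul_transpose]
  rw [dotProduct_comm]

/-- Explicit Euler never decreases the energy `H(x,v) = (1/2)⟨v, M v⟩ + P(x)` for
a differentiable convex potential `P` on `ℝ^d` with symmetric positive-definite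
mass matrix `M`; in fact it gains at least `(h²/2)⟨∇P(x₀), M⁻¹∇P(x₀)⟩`. -/
theorem explicit_euler_gains_energy
    (d : ℕ) (hd : 1 ≤ d)
    (M : Matrix (Fin d) (Fin d) ℝ) (hM : M.PosDef)
    (P : EuclideanSpace ℝ (Fin d) → ℝ)
    (g : EuclideanSpace ℝ (Fin d) → EuclideanSpace ℝ (Fin d))
    (hconv : ConvexOn ℝ Set.univ P)
    (hgrad : ∀ x, HasGradientAt P (g x) x)
    (h : ℝ) (hh : 0 < h)
    (H : EuclideanSpace ℝ (Fin d) → EuclideanSpace ℝ (Fin d) → ℝ)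
    (hH : ∀ x v, H x v = (1 / 2) * ⟪v, Matrix.toEuclideanLin M v⟫ + P x)
    (x₀ v₀ x₁ v₁ : EuclideanSpace ℝ (Fin d))
    (hx : x₁ = x₀ + h • v₀)
    (hv : v₁ = v₀ - h • Matrix.toEuclideanLin M⁻¹ (g x₀)) :
    H x₁ v₁ ≥ H x₀ v₀ + (h ^ 2 / 2) * ⟪g x₀, Matrix.toEuclideanLin M⁻¹ (g x₀)⟫ := by
  have hMsym : Mᵀ = M := by
    have := hM.isHermitian
    simpa [Matrix.IsHermitian, Matrix.conjTranspose_eq_transpose_of_trivial] using this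
  set A := Matrix.toEuclideanLin M with hA
  set B := Matrix.toEuclideanLin M⁻¹ with hB
  set u := g x₀ with hu
  -- A (B u) = u
  have hABu : A (B u) = u := by
    rw [hA, hB, Matrix.toEuclideanLin_apply, Matrix.toEuclideanLin_apply]
    simp only [Equiv.apply_symm_apply]
    rw [Matrix.mulVec_mulVec, Matrix.mul_nonsing_inv _ hM.det_pos.ne'.isUnit]
    simp
  -- convexity inequality
  have hP : P x₀ + h * ⟪u, v₀⟫ ≤ P x₁ := by
    have := grad_ineq (y := x₁) hconv (hgrad x₀)
    rw [hx] at this ⊢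
    simpa [inner_smul_right] using this
  -- kinetic energy expansion
  have h1 : ⟪v₀, A (B u)⟫ = ⟪u, v₀⟫ := by rw [hABu, real_inner_comm]
  have h2 : ⟪B u, A v₀⟫ = ⟪u, v₀⟫ := by rw [← toEuc_symm hMsym, hABu]
  have h3 : ⟪B u, A (B u)⟫ = ⟪u, B u⟫ := by rw [real_inner_comm, hABu]
  have hK : ⟪v₁, A v₁⟫ = ⟪v₀, A v₀⟫ - 2 * h * ⟪u, v₀⟫ + h ^ 2 * ⟪u, B u⟫ := by
    rw [hv, map_sub, LinearMap.map_smul, inner_sub_left, inner_sub_right, inner_sub_right,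
      real_inner_smul_left, real_inner_smul_left, real_inner_smul_right, real_inner_smul_right,
      h1, h2, h3]
    ring
  rw [hH, hH, hK]
  linarith [hP]
end

section
/- Let γ = 1 − √2/2, and for h ∈ ℝ define R_Φ(ih) = (1 + (1−2γ)·ih)/(1 − γ·ih)² and R_Ψ(ih) = (1 + γ·ih)²/(1 − (1−2γ)·ih) as complex numbers. Then the real part Re(R_Φ(ih) + R_Ψ(ih)) tends to −√2 − 1/2 as h → ∞. (The trace of the decoupled symplectic method built from SDIRK2 on the harmonic test problem has limiting value −√2 − 1/2.) -/
open Filter Complex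

lemma sdirk2_aux_re (s h : ℝ) (hs : s^2 = 2) (hs0 : 0 < s) :
    (((1 + (1 - 2 * ((1 - s/2 : ℝ) : ℂ)) * (Complex.I * (h : ℂ))) /
        (1 - ((1 - s/2 : ℝ) : ℂ) * (Complex.I * (h : ℂ))) ^ 2 +
      (1 + ((1 - s/2 : ℝ) : ℂ) * (Complex.I * (h : ℂ))) ^ 2 /
        (1 - (1 - 2 * ((1 - s/2 : ℝ) : ℂ)) * (Complex.I * (h : ℂ)))).re)
    = (1 - (2*s - 5/2) * h^2) / ((1 + (3/2 - s) * h^2)^2)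
      + (1 - (2*s - 5/2) * h^2) / (1 + (3 - 2*s) * h^2) := by
  have hlt : s < 3/2 := by nlinarith
  have d1 : (0:ℝ) < 1 + (3/2 - s) * h^2 := by nlinarith [sq_nonneg h]
  have d2 : (0:ℝ) < 1 + (3 - 2*s) * h^2 := by nlinarith [sq_nonneg h]
  have h1 : (1 - ((1 - s/2 : ℝ) : ℂ) * (Complex.I * (h : ℂ))) ≠ 0 := fun H => by
    simpa using congrArg Complex.re H
  have h2 : (1 - (1 - 2 * ((1 - s/2 : ℝ) : ℂ)) * (Complex.I * (h : ℂ))) ≠ 0 := by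
    intro H
    have := congrArg Complex.re H
    simp at this
  have c1 : ((((1 + (3/2 - s) * h^2)^2 : ℝ)) : ℂ) ≠ 0 := by
    exact_mod_cast (pow_pos d1 2).ne'
  have c2 : (((1 + (3 - 2*s) * h^2 : ℝ)) : ℂ) ≠ 0 := by exact_mod_cast d2.ne'
  have hsc : ((s:ℝ):ℂ)^2 = 2 := by exact_mod_cast congrArg (fun x : ℝ => (x:ℂ)) hs
  have hΦ : (1 + (1 - 2 * ((1 - s/2 : ℝ) : ℂ)) * (Complex.I * (h : ℂ))) /
        (1 - ((1 - s/2 : ℝ) : ℂ) * (Complex.I * (h : ℂ))) ^ 2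
      = (((1 - (2*s - 5/2) * h^2 : ℝ) : ℂ)
          + ((h*(1 - (5*s/2 - 7/2) * h^2) : ℝ) : ℂ) * Complex.I) /
        (((1 + (3/2 - s) * h^2)^2 : ℝ) : ℂ) := by
    rw [div_eq_div_iff (pow_ne_zero 2 h1) c1]
    push_cast
    linear_combination
      ((h:ℂ)^2 + (9/2)*(h:ℂ)^4 + (-4)*(s:ℂ)*(h:ℂ)^4 + (-1/4)*(s:ℂ)^2*(h:ℂ)^2
        + (-1/8)*(s:ℂ)^2*(h:ℂ)^4 + (1/2)*(s:ℂ)^3*(h:ℂ)^4 + (-1)*Complex.I*(h:ℂ)^3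
        + (-7/2)*Complex.I*(h:ℂ)^5 + Complex.I*(s:ℂ)*(h:ℂ)^3 + (6)*Complex.I*(s:ℂ)*(h:ℂ)^5
        + (-1/4)*Complex.I*(s:ℂ)^2*(h:ℂ)^3 + (-27/8)*Complex.I*(s:ℂ)^2*(h:ℂ)^5
        + (5/8)*Complex.I*(s:ℂ)^3*(h:ℂ)^5) * Complex.I_sq
      + ((1/4)*(h:ℂ)^2 + (9/8)*(h:ℂ)^4 + (-1/2)*(s:ℂ)*(h:ℂ)^4 + (1/4)*Complex.I*(h:ℂ)^3
        + (-5/8)*Complex.I*(h:ℂ)^5 + (3/8)*Complex.I*(s:ℂ)*(h:ℂ)^5) * hsc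
  have hΨ : (1 + ((1 - s/2 : ℝ) : ℂ) * (Complex.I * (h : ℂ))) ^ 2 /
        (1 - (1 - 2 * ((1 - s/2 : ℝ) : ℂ)) * (Complex.I * (h : ℂ)))
      = (((1 - (2*s - 5/2) * h^2 : ℝ) : ℂ)
          + ((h*(1 - (5*s/2 - 7/2) * h^2) : ℝ) : ℂ) * Complex.I) /
        ((1 + (3 - 2*s) * h^2 : ℝ) : ℂ) := by
    rw [div_eq_div_iff h2 c2]
    push_cast
    linear_combination
      ((-1/2)*(h:ℂ)^4 + (s:ℂ)*(h:ℂ)^4 + (1/4)*(s:ℂ)^2*(h:ℂ)^2 + (1/4)*(s:ℂ)^2*(h:ℂ)^4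
        + (-1/2)*(s:ℂ)^3*(h:ℂ)^4) * Complex.I_sq
      + ((-1/4)*(h:ℂ)^2 + (-1/4)*(h:ℂ)^4 + (1/2)*(s:ℂ)*(h:ℂ)^4) * hsc
  rw [hΦ, hΨ]
  have hsplit : ((((1 - (2*s - 5/2) * h^2 : ℝ) : ℂ)
          + ((h*(1 - (5*s/2 - 7/2) * h^2) : ℝ) : ℂ) * Complex.I) /
        (((1 + (3/2 - s) * h^2)^2 : ℝ) : ℂ)
      + (((1 - (2*s - 5/2) * h^2 : ℝ) : ℂ)
          + ((h*(1 - (5*s/2 - 7/2) * h^2) : ℝ) : ℂ) * Complex.I) /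
        ((1 + (3 - 2*s) * h^2 : ℝ) : ℂ))
      = (((1 - (2*s - 5/2) * h^2) / ((1 + (3/2 - s) * h^2)^2)
          + (1 - (2*s - 5/2) * h^2) / (1 + (3 - 2*s) * h^2) : ℝ) : ℂ)
        + (((h*(1 - (5*s/2 - 7/2) * h^2)) / ((1 + (3/2 - s) * h^2)^2)
          + (h*(1 - (5*s/2 - 7/2) * h^2)) / (1 + (3 - 2*s) * h^2) : ℝ) : ℂ) * Complex.I := by
    push_cast
    ring
  rw [hsplit, Complex.add_re, Complex.ofReal_re, Complex.mul_I_re, Complex.ofReal_im,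
    neg_zero, add_zero]

set_option maxHeartbeats 1600000 in
/-- The trace of the decoupled symplectic method built from SDIRK2 (with
`γ = 1 − √2/2`) on the harmonic test problem,
`Re(R_Φ(ih) + R_Ψ(ih))`, tends to `−√2 − 1/2` as `h → ∞`. -/
theorem sdirk2_decoupled_trace_limit :
    let γ : ℝ := 1 - Real.sqrt 2 / 2
    let RΦ : ℝ → ℂ := fun h =>
      (1 + (1 - 2 * (γ : ℂ)) * (Complex.I * (h : ℂ))) /
        (1 - (γ : ℂ) * (Complex.I * (h : ℂ))) ^ 2
    let RΨ : ℝ → ℂ := fun h =>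
      (1 + (γ : ℂ) * (Complex.I * (h : ℂ))) ^ 2 /
        (1 - (1 - 2 * (γ : ℂ)) * (Complex.I * (h : ℂ)))
    Tendsto (fun h : ℝ => (RΦ h + RΨ h).re) atTop
      (nhds (-Real.sqrt 2 - 1 / 2)) := by
  intro γ RΦ RΨ
  simp only [RΦ, RΨ, γ]
  clear RΨ RΦ γ
  set s := Real.sqrt 2 with hsdef
  have hs : s^2 = 2 := Real.sq_sqrt (by norm_num)
  have hs0 : 0 < s := Real.sqrt_pos.mpr (by norm_num)
  clear_value s
  have hlt : s < 3/2 := by nlinarith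
  set F : ℝ → ℝ := fun t =>
    t * (t - (2*s - 5/2)) / ((t + (3/2 - s))^2) + (t - (2*s - 5/2)) / (t + (3 - 2*s))
    with hF
  have hb' : (0:ℝ) < 3/2 - s := by nlinarith
  have hd' : (0:ℝ) < 3 - 2*s := by nlinarith
  have hb : (3/2 - s) ≠ 0 := ne_of_gt hb'
  have hd : (3 - 2*s) ≠ 0 := ne_of_gt hd'
  clear_value F
  have hcont : ContinuousAt F 0 := by
    rw [hF]
    apply ContinuousAt.add
    · apply ContinuousAt.div (by fun_prop) (by fun_prop)
      simpa using pow_ne_zero 2 hb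
    · apply ContinuousAt.div (by fun_prop) (by fun_prop)
      simpa using hd
  have hF0 : F 0 = -s - 1/2 := by
    simp only [hF, zero_mul, zero_div, zero_add, zero_sub]
    rw [div_eq_iff hd]
    linear_combination (-2:ℝ) * hs
  have hu : Tendsto (fun h : ℝ => (h^2)⁻¹) atTop (nhds 0) :=
    (tendsto_pow_atTop (two_ne_zero)).inv_tendsto_atTop
  have hcomp : Tendsto (fun h : ℝ => F ((h^2)⁻¹)) atTop (nhds (-s - 1/2)) := by
    rw [← hF0]
    exact hcont.tendsto.comp hu
  refine hcomp.congr' ?_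
  clear hcomp hcont hu hF0
  filter_upwards [eventually_ge_atTop (1:ℝ)] with h hh
  have hhpos : (0:ℝ) < h := lt_of_lt_of_le one_pos hh
  have hne : h ≠ 0 := hhpos.ne'
  have hinv : (0:ℝ) < (h^2)⁻¹ := by positivity
  have d1 : (0:ℝ) < 1 + (3/2 - s) * h^2 :=
    by linarith [mul_pos hb' (pow_pos hhpos 2)]
  have d2 : (0:ℝ) < 1 + (3 - 2*s) * h^2 :=
    by linarith [mul_pos hd' (pow_pos hhpos 2)]
  have e1 : ((h^2)⁻¹ + (3/2 - s)) ≠ 0 := ne_of_gt (by linarith)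
  have e2 : ((h^2)⁻¹ + (3 - 2*s)) ≠ 0 := ne_of_gt (by linarith)
  rw [sdirk2_aux_re s h hs hs0]
  simp only [hF]
  field_simp
end

section
/- Fix ω > 0 and β ∈ (0,1), and for each h > 0 set ħ = h²ω² and let (x_n(h), v_n(h)) be the A-1 barrier recursion with x₀ = βh, v₀ = −1. Then as h → ∞: v₂(h) → −β, v₃(h) → 1−β, v₄(h) → 1, and x₄(h)/h → 1−β; moreover for all sufficiently large h one has x₁(h) < 0, x₂(h) < 0, x₃(h) < 0 and x₄(h) > 0, so the collision is resolved in exactly four steps and the particle exits with limiting speed 1 (A-1 preserves the speed of the particle through the collision in the large time-step limit, independent of the phase β). -/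
open Filter

/-- The A-1 scheme for a unit-mass particle against the one-sided quadratic
barrier `P(x) = (1/2)ω²x²` for `x < 0`, `P(x) = 0` for `x ≥ 0`, with time step
`h`, collision phase `β`, and initial data `x₀ = βh`, `v₀ = −1`:
`y_n = x_n + h v_n`; `x_{n+1} = y_n` if `y_n ≥ 0`, else `y_n/(1+ħ)` with
`ħ = h²ω²` (implicit Euler position update); and
`v_{n+1} = v_n − hω²·min(x_n, 0)` (adjoint explicit velocity update). -/
noncomputable def a1seq (ω h β : ℝ) : ℕ → ℝ × ℝ
  | 0 => (β * h, -1)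
  | n + 1 =>
    let p := a1seq ω h β n
    let y := p.1 + h * p.2
    (if 0 ≤ y then y else y / (1 + h ^ 2 * ω ^ 2),
     p.2 - h * ω ^ 2 * min p.1 0)

/-- Closed forms and sign facts for the first four A-1 steps when the
time step is large enough that `9 ≤ (1-β)·h²ω²`. -/
lemma a1_key (ω β h : ℝ) (hω : 0 < ω) (hβ0 : 0 < β) (hβ1 : β < 1)
    (hh : 0 < h) (hbig : 9 ≤ (1-β) * (h^2*ω^2)) :
    ((a1seq ω h β 1).1 < 0 ∧ (a1seq ω h β 2).1 < 0 ∧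
     (a1seq ω h β 3).1 < 0 ∧ 0 < (a1seq ω h β 4).1) ∧
    (a1seq ω h β 2).2 = -β + (β-1) * (1/(1+h^2*ω^2)) ∧
    (a1seq ω h β 3).2 = (1-β) + (-1) * (1/(1+h^2*ω^2)) + (β-1) * (1/(1+h^2*ω^2))^2 ∧
    (a1seq ω h β 4).2 = 1 + (1-2*β) * (1/(1+h^2*ω^2)) + (β-2) * (1/(1+h^2*ω^2))^2
      + (β-1) * (1/(1+h^2*ω^2))^3 ∧
    (a1seq ω h β 4).1 / h = (1-β) + (-1-β) * (1/(1+h^2*ω^2)) + (2*β-3) * (1/(1+h^2*ω^2))^2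
      + (β-1) * (1/(1+h^2*ω^2))^3 := by
  have step : ∀ n, a1seq ω h β (n+1) =
      (if 0 ≤ (a1seq ω h β n).1 + h*(a1seq ω h β n).2
        then (a1seq ω h β n).1 + h*(a1seq ω h β n).2
        else ((a1seq ω h β n).1 + h*(a1seq ω h β n).2)/(1+h^2*ω^2),
       (a1seq ω h β n).2 - h*ω^2*min (a1seq ω h β n).1 0) := fun n => rfl
  set t := h^2*ω^2 with htdef
  have ht0 : 0 < t := by positivity
  have h1t : (0:ℝ) < 1 + t := by linarith
  have hne : (1:ℝ) + t ≠ 0 := ne_of_gt h1t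
  have ht9 : (9:ℝ) ≤ t := by nlinarith
  have hb : (0:ℝ) < 1 - β := by linarith
  have e0 : a1seq ω h β 0 = (β*h, -1) := rfl
  -- step 1
  have e1 : a1seq ω h β 1 = ((β-1)*h/(1+t), -1) := by
    rw [step 0, e0]; dsimp only
    rw [if_neg (not_le.mpr (by nlinarith [mul_pos hb hh])),
      min_eq_right (by positivity)]
    refine Prod.ext ?_ ?_ <;> dsimp <;> ring
  -- step 2
  have x1neg : (β-1)*h/(1+t) < 0 :=
    div_neg_of_neg_of_pos (by nlinarith [mul_pos hb hh]) h1t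
  have e2 : a1seq ω h β 2 = ((β-2-t)*h/(1+t)^2, -β + (β-1) * (1/(1+t))) := by
    rw [step 1, e1]; dsimp only
    rw [if_neg (not_le.mpr (by nlinarith)), min_eq_left (le_of_lt x1neg)]
    refine Prod.ext ?_ ?_ <;> dsimp
    · field_simp; ring
    · rw [htdef]; field_simp; ring
  have x2neg : (β-2-t)*h/(1+t)^2 < 0 :=
    div_neg_of_neg_of_pos (by nlinarith [mul_pos hb hh, mul_pos ht0 hh]) (by positivity)
  -- step 3
  have y2eq : (β-2-t)*h/(1+t)^2 + h*(-β + (β-1) * (1/(1+t)))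
      = (β-3-(2+β)*t-β*t^2)*h/(1+t)^2 := by field_simp; ring
  have num3neg : (β-3-(2+β)*t-β*t^2)*h < 0 := by
    nlinarith [mul_pos hb hh, mul_pos ht0 hh, mul_pos (mul_pos hβ0 hh) ht0,
      mul_pos (mul_pos hβ0 hh) (mul_pos ht0 ht0)]
  have y2neg : (β-3-(2+β)*t-β*t^2)*h/(1+t)^2 < 0 :=
    div_neg_of_neg_of_pos num3neg (by positivity)
  have e3 : a1seq ω h β 3 = ((β-3-(2+β)*t-β*t^2)*h/(1+t)^3,
      (1-β) + (-1) * (1/(1+t)) + (β-1) * (1/(1+t))^2) := by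
    rw [step 2, e2]; dsimp only
    rw [y2eq, if_neg (not_le.mpr y2neg), min_eq_left (le_of_lt x2neg)]
    refine Prod.ext ?_ ?_ <;> dsimp
    · rw [div_div, ← pow_succ]
    · rw [htdef]; field_simp; ring
  have x3neg : (β-3-(2+β)*t-β*t^2)*h/(1+t)^3 < 0 :=
    div_neg_of_neg_of_pos num3neg (by positivity)
  -- step 4
  have y3eq : (β-3-(2+β)*t-β*t^2)*h/(1+t)^3
      + h*((1-β) + (-1) * (1/(1+t)) + (β-1) * (1/(1+t))^2)
      = ((β-4)-(2+3*β)*t+(2-4*β)*t^2+(1-β)*t^3)*h/(1+t)^3 := by field_simp; ring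
  have Npos : 0 < (β-4)-(2+3*β)*t+(2-4*β)*t^2+(1-β)*t^3 := by
    nlinarith [mul_le_mul_of_nonneg_right hbig (sq_nonneg t), sq_nonneg t,
      mul_pos ht0 ht0, mul_pos (mul_pos ht0 ht0) ht0]
  have y3pos : 0 < ((β-4)-(2+3*β)*t+(2-4*β)*t^2+(1-β)*t^3)*h/(1+t)^3 := by positivity
  have e4 : a1seq ω h β 4 = (((β-4)-(2+3*β)*t+(2-4*β)*t^2+(1-β)*t^3)*h/(1+t)^3,
      1 + (1-2*β) * (1/(1+t)) + (β-2) * (1/(1+t))^2 + (β-1) * (1/(1+t))^3) := by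
    rw [step 3, e3]; dsimp only
    rw [y3eq, if_pos (le_of_lt y3pos), min_eq_left (le_of_lt x3neg)]
    refine Prod.ext rfl ?_
    dsimp
    rw [htdef]; field_simp; ring
  refine ⟨⟨by rw [e1]; exact x1neg, by rw [e2]; exact x2neg, by rw [e3]; exact x3neg,
    by rw [e4]; exact y3pos⟩, by rw [e2], by rw [e3], by rw [e4], ?_⟩
  rw [e4]; dsimp only; field_simp; ring

private lemma lim4 {α : Type*} {l : Filter α} {g : α → ℝ} (hg : Tendsto g l (nhds 0))
    (a b c d : ℝ) :
    Tendsto (fun x => a + b * g x + c * g x ^ 2 + d * g x ^ 3) l (nhds a) := by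
  have h2 : Tendsto (fun x => g x ^ 2) l (nhds 0) := by simpa using hg.pow 2
  have h3 : Tendsto (fun x => g x ^ 3) l (nhds 0) := by simpa using hg.pow 3
  simpa using (((tendsto_const_nhds (x := a)).add (hg.const_mul b)).add
    (h2.const_mul c)).add (h3.const_mul d)

set_option maxHeartbeats 1000000 in
/-- In the large time-step limit `h → ∞`, A-1 resolves the barrier collision in
exactly four steps and preserves the speed of the particle, independent of the
phase `β`: `v₂ → −β`, `v₃ → 1−β`, `v₄ → 1`, `x₄/h → 1−β`, and eventually
`x₁ < 0`, `x₂ < 0`, `x₃ < 0`, `x₄ > 0`. -/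
theorem a1_barrier_large_timestep
    (ω β : ℝ) (hω : 0 < ω) (hβ0 : 0 < β) (hβ1 : β < 1) :
    Tendsto (fun h : ℝ => (a1seq ω h β 2).2) atTop (nhds (-β)) ∧
    Tendsto (fun h : ℝ => (a1seq ω h β 3).2) atTop (nhds (1 - β)) ∧
    Tendsto (fun h : ℝ => (a1seq ω h β 4).2) atTop (nhds 1) ∧
    Tendsto (fun h : ℝ => (a1seq ω h β 4).1 / h) atTop (nhds (1 - β)) ∧
    (∀ᶠ h : ℝ in atTop,
      (a1seq ω h β 1).1 < 0 ∧ (a1seq ω h β 2).1 < 0 ∧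
      (a1seq ω h β 3).1 < 0 ∧ 0 < (a1seq ω h β 4).1) := by
  have hb : (0:ℝ) < 1 - β := by linarith
  have httop : Tendsto (fun h:ℝ => h^2*ω^2) atTop atTop :=
    (tendsto_pow_atTop two_ne_zero).atTop_mul_const (by positivity)
  have hinv : Tendsto (fun h:ℝ => 1/(1+h^2*ω^2)) atTop (nhds 0) := by
    simpa [one_div, Function.comp_def] using
      tendsto_inv_atTop_zero.comp (tendsto_atTop_add_const_left atTop 1 httop)
  have hev : ∀ᶠ h:ℝ in atTop, 0 < h ∧ 9 ≤ (1-β)*(h^2*ω^2) :=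
    (eventually_gt_atTop 0).and ((httop.const_mul_atTop hb).eventually_ge_atTop 9)
  refine ⟨?_, ?_, ?_, ?_, ?_⟩
  · have T : Tendsto (fun h:ℝ => -β + (β-1) * (1/(1+h^2*ω^2))) atTop
        (nhds (-β + (β-1) * 0)) := tendsto_const_nhds.add (tendsto_const_nhds.mul hinv)
    rw [show -β + (β-1) * (0:ℝ) = -β by ring] at T
    exact T.congr' (hev.mono fun h hh => ((a1_key ω β h hω hβ0 hβ1 hh.1 hh.2).2.1).symm)
  · have T : Tendsto (fun h:ℝ => (1-β) + (-1) * (1/(1+h^2*ω^2))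
        + (β-1) * (1/(1+h^2*ω^2))^2) atTop
        (nhds ((1-β) + (-1) * 0 + (β-1) * 0^2)) :=
      (tendsto_const_nhds.add (tendsto_const_nhds.mul hinv)).add
        (tendsto_const_nhds.mul (hinv.pow 2))
    rw [show (1-β) + (-1) * (0:ℝ) + (β-1) * 0^2 = 1-β by ring] at T
    exact T.congr' (hev.mono fun h hh => ((a1_key ω β h hω hβ0 hβ1 hh.1 hh.2).2.2.1).symm)
  · have T : Tendsto (fun h:ℝ => 1 + (1-2*β) * (1/(1+h^2*ω^2))
        + (β-2) * (1/(1+h^2*ω^2))^2 + (β-1) * (1/(1+h^2*ω^2))^3) atTop (nhds 1) :=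
      lim4 hinv 1 (1-2*β) (β-2) (β-1)
    exact T.congr' (hev.mono fun h hh => ((a1_key ω β h hω hβ0 hβ1 hh.1 hh.2).2.2.2.1).symm)
  · have T : Tendsto (fun h:ℝ => (1-β) + (-1-β) * (1/(1+h^2*ω^2))
        + (2*β-3) * (1/(1+h^2*ω^2))^2 + (β-1) * (1/(1+h^2*ω^2))^3) atTop (nhds (1-β)) :=
      lim4 hinv (1-β) (-1-β) (2*β-3) (β-1)
    exact T.congr' (hev.mono fun h hh => ((a1_key ω β h hω hβ0 hβ1 hh.1 hh.2).2.2.2.2).symm)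
  · exact hev.mono fun h hh => (a1_key ω β h hω hβ0 hβ1 hh.1 hh.2).1
end
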